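/- arXiv:2401.08146 — 3 statements merged into one kernel-verified Lean document; each statement's English description precedes it below -/
import Mathlib

section
/- For every positive integer m, there is a surjective group homomorphism from the presented group H_m = ⟨x, y ∣ x^m y x^m = y x^m y, y^m x y^m = x y^m x, (x² y^m)⁴ = 1⟩ onto SL₂(ℤ[1/m]) sending x to [[1,0],[1,1]] and y to [[1,-1/m],[0,1]]. -/
/-! The braid relations are both instances of
`lower s * upper t * lower s = upper t * lower s * upper t` for `s * t = -1`, with
`(s, t) = (m, -1/m)` and `(1, -1)`, and `x² y^m` goes to `!![1, -1; 2, -1]`, of order 4.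
The image contains `lower n` and `upper (n / m)` for integers `n`, hence the Weyl elements and
`diag (m, 1/m)`; conjugating by powers of the latter yields every elementary matrix over `ℤ[1/m]`.
Finally, over any subring of `ℚ` the Euclidean algorithm on the first column shows that
elementary matrices generate `SL₂`. -/

/-- The subring ℤ[1/m] of ℚ. -/
def Zinv (m : ℕ) : Subring ℚ := Subring.closure {((m : ℚ))⁻¹}

lemma invMem (m : ℕ) : ((m : ℚ))⁻¹ ∈ Zinv m :=
  Subring.subset_closure (Set.mem_singleton _)

def matA (m : ℕ) : Matrix.SpecialLinearGroup (Fin 2) (Zinv m) :=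
  ⟨!![1, 0; 1, 1], by simp [Matrix.det_fin_two_of]⟩

def matQ (m : ℕ) : Matrix.SpecialLinearGroup (Fin 2) (Zinv m) :=
  ⟨!![1, ⟨-((m : ℚ))⁻¹, neg_mem (invMem m)⟩; 0, 1], by simp [Matrix.det_fin_two_of]⟩

def matB (m : ℕ) : Matrix.SpecialLinearGroup (Fin 2) (Zinv m) :=
  ⟨!![0, 1; -1, 0], by simp [Matrix.det_fin_two_of]⟩

def matU (m : ℕ) (hm : 0 < m) : Matrix.SpecialLinearGroup (Fin 2) (Zinv m) :=
  ⟨!![(m : Zinv m), 0; 0, ⟨((m : ℚ))⁻¹, invMem m⟩], by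
    have hm0 : (m : ℚ) ≠ 0 := Nat.cast_ne_zero.2 hm.ne'
    apply Subtype.ext
    simp [Matrix.det_fin_two_of, mul_inv_cancel₀ hm0]⟩

/-- Relators of H_m = ⟨x, y ∣ x^m y x^m = y x^m y, y^m x y^m = x y^m x, (x² y^m)⁴ = 1⟩,
with `0` playing the role of `x` and `1` that of `y`. -/
def Hrels (m : ℕ) : Set (FreeGroup (Fin 2)) :=
  { FreeGroup.of 0 ^ m * FreeGroup.of 1 * FreeGroup.of 0 ^ m *
      (FreeGroup.of 1 * FreeGroup.of 0 ^ m * FreeGroup.of 1)⁻¹,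
    FreeGroup.of 1 ^ m * FreeGroup.of 0 * FreeGroup.of 1 ^ m *
      (FreeGroup.of 0 * FreeGroup.of 1 ^ m * FreeGroup.of 0)⁻¹,
    (FreeGroup.of 0 ^ 2 * FreeGroup.of 1 ^ m) ^ 4 }

open Matrix
open scoped MatrixGroups

namespace Matrix.SpecialLinearGroup

lemma transvection_zpow {ι R : Type*} [DecidableEq ι] [Fintype ι] [CommRing R] {i j : ι}
    (hij : i ≠ j) (b : R) (n : ℤ) : transvection hij b ^ n = transvection hij (n • b) := by
  induction n using Int.induction_on with
  | zero => simp
  | succ n ih => rw [_root_.zpow_add_one, ih, ← transvection_add, add_smul, one_smul]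
  | pred n ih =>
    rw [_root_.zpow_sub_one, ih, transvection_inv, ← transvection_add, sub_smul, one_smul,
      sub_eq_add_neg]

end Matrix.SpecialLinearGroup

namespace SL2
open Matrix.SpecialLinearGroup
variable {R : Type*} [CommRing R]

abbrev upper (t : R) : SL(2, R) := transvection (i := 0) (j := 1) (by decide) t
abbrev lower (t : R) : SL(2, R) := transvection (i := 1) (j := 0) (by decide) t

lemma coe_upper (t : R) : (upper t : Matrix (Fin 2) (Fin 2) R) = !![1, t; 0, 1] := by
  ext i j; fin_cases i <;> fin_cases j <;> simp [transvection_coe]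

lemma coe_lower (t : R) : (lower t : Matrix (Fin 2) (Fin 2) R) = !![1, 0; t, 1] := by
  ext i j; fin_cases i <;> fin_cases j <;> simp [transvection_coe]

lemma coe_lower_mul_upper_mul_lower {s t : R} (h : s * t = -1) :
    ((lower s * upper t * lower s : SL(2, R)) : Matrix (Fin 2) (Fin 2) R) = !![0, t; s, 0] := by
  rw [coe_mul, coe_mul, coe_upper, coe_lower, mul_fin_two, mul_fin_two]
  ext i j; fin_cases i <;> fin_cases j <;> simp <;> grind

lemma coe_upper_mul_lower_mul_upper {s t : R} (h : s * t = -1) :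
    ((upper t * lower s * upper t : SL(2, R)) : Matrix (Fin 2) (Fin 2) R) = !![0, t; s, 0] := by
  rw [coe_mul, coe_mul, coe_upper, coe_lower, mul_fin_two, mul_fin_two]
  ext i j; fin_cases i <;> fin_cases j <;> simp <;> grind

lemma lower_mul_upper_pow_four : (lower 2 * upper (-1) : SL(2, R)) ^ 4 = 1 := by
  ext i j
  simp only [coe_mul, coe_upper, coe_lower, mul_fin_two, pow_succ, pow_zero, coe_one]
  fin_cases i <;> fin_cases j <;> norm_num

lemma braid {s t : R} (h : s * t = -1) :
    lower s * upper t * lower s = upper t * lower s * upper t :=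
  Subtype.ext <| by rw [coe_lower_mul_upper_mul_lower h, coe_upper_mul_lower_mul_upper h]

def S : SL(2, R) := lower 1 * upper (-1) * lower 1

lemma coe_S : ((S : SL(2, R)) : Matrix (Fin 2) (Fin 2) R) = !![0, -1; 1, 0] :=
  coe_lower_mul_upper_mul_lower (by ring)

lemma S_mul_upper (t : R) : S * upper t = lower (-t) * S := by
  ext i j
  simp only [coe_mul, coe_S, coe_upper, coe_lower, mul_fin_two]
  fin_cases i <;> fin_cases j <;> simp

lemma S_mul_upper_mul_apply_zero_zero (t : R) (g : SL(2, R)) :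
    (S * upper t * g : SL(2, R)) 0 0 = -g 1 0 := by
  simp [coe_S, coe_upper, mul_apply, Fin.sum_univ_two]

lemma S_mul_upper_mul_apply_one_zero (t : R) (g : SL(2, R)) :
    (S * upper t * g : SL(2, R)) 1 0 = g 0 0 + t * g 1 0 := by
  simp [coe_S, coe_upper, mul_apply, Fin.sum_univ_two]

def diag : Rˣ →* SL(2, R) where
  toFun u := ⟨!![(u : R), 0; 0, ↑u⁻¹], by simp [det_fin_two_of]⟩
  map_one' := by ext i j; fin_cases i <;> fin_cases j <;> simp
  map_mul' u v := Subtype.ext <| by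
    change _ = !![(u : R), 0; 0, ↑u⁻¹] * !![(v : R), 0; 0, ↑v⁻¹]
    simp [mul_comm]

lemma coe_diag (u : Rˣ) : (diag u : Matrix (Fin 2) (Fin 2) R) = !![(u : R), 0; 0, ↑u⁻¹] := rfl

lemma diag_mul_upper (u : Rˣ) (t : R) : diag u * upper t = upper (u ^ 2 * t) * diag u := by
  ext i j
  simp only [coe_mul, coe_diag, coe_upper, mul_fin_two]
  fin_cases i <;> fin_cases j <;> simp [sq, mul_assoc, mul_left_comm (u : R)]

lemma diag_mul_lower_mul_upper_mul_lower (u : Rˣ) :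
    diag u * (lower (u : R) * upper (-((u⁻¹ : Rˣ) : R)) * lower (u : R)) = S := by
  ext i j
  rw [coe_mul, coe_lower_mul_upper_mul_lower (by simp), coe_S, coe_diag, mul_fin_two]
  fin_cases i <;> fin_cases j <;> simp

def elementary (R : Type*) [CommRing R] : Subgroup SL(2, R) :=
  Subgroup.closure (Set.range upper ∪ Set.range lower)

lemma upper_mem_elementary (t : R) : upper t ∈ elementary R :=
  Subgroup.subset_closure (Or.inl ⟨t, rfl⟩)

lemma lower_mem_elementary (t : R) : lower t ∈ elementary R :=
  Subgroup.subset_closure (Or.inr ⟨t, rfl⟩)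

lemma S_mem_elementary : (S : SL(2, R)) ∈ elementary R :=
  mul_mem (mul_mem (lower_mem_elementary _) (upper_mem_elementary _)) (lower_mem_elementary _)

lemma diag_mem_elementary (u : Rˣ) : diag u ∈ elementary R := by
  rw [eq_mul_inv_of_mul_eq (diag_mul_lower_mul_upper_mul_lower u)]
  exact mul_mem S_mem_elementary <| inv_mem <|
    mul_mem (mul_mem (lower_mem_elementary _) (upper_mem_elementary _)) (lower_mem_elementary _)

lemma mem_elementary_of_apply_one_zero_eq_zero {g : SL(2, R)} (hg : g 1 0 = 0) :
    g ∈ elementary R := by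
  have hdet : g 0 0 * g 1 1 = 1 := by
    have hdet := g.det_coe
    rwa [det_fin_two, hg, mul_zero, sub_zero] at hdet
  have hg_eq : g = diag ⟨g 0 0, g 1 1, hdet, by rwa [mul_comm]⟩ * upper (g 1 1 * g 0 1) := by
    ext i j
    simp only [coe_mul, coe_diag, coe_upper, mul_fin_two]
    fin_cases i <;> fin_cases j <;> simp [hg, ← mul_assoc, hdet]
  rw [hg_eq]
  exact mul_mem (diag_mem_elementary _) (upper_mem_elementary _)

-- `(a, c)` is the first column of `g` scaled by `d`; one step of the Euclidean algorithm,
-- `S * upper (-(a / c))`, turns it into `(-c, a % c)`.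
lemma mem_elementary_of_mul_eq_intCast {R : Subring ℚ} {d : ℚ} (hd : d ≠ 0) (g : SL(2, R))
    (a c : ℤ) (ha : (g 0 0 : ℚ) * d = a) (hc : (g 1 0 : ℚ) * d = c) : g ∈ elementary R := by
  by_cases hc0 : c = 0
  · refine mem_elementary_of_apply_one_zero_eq_zero (Subtype.ext ?_)
    simpa [hc0, hd] using hc
  set g' := S * upper ((-(a / c) : ℤ) : R) * g with hg'
  have h00 : (g' 0 0 : ℚ) * d = (-c : ℤ) := by
    rw [hg', S_mul_upper_mul_apply_zero_zero]
    push_cast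
    linear_combination -hc
  have h10 : (g' 1 0 : ℚ) * d = (a % c : ℤ) := by
    rw [hg', S_mul_upper_mul_apply_one_zero, Int.emod_def]
    push_cast
    linear_combination ha - (a / c : ℤ) * hc
  have hg'_mem := mem_elementary_of_mul_eq_intCast hd g' (-c) (a % c) h00 h10
  rw [← inv_mul_cancel_left (S * upper ((-(a / c) : ℤ) : R)) g]
  exact mul_mem (inv_mem (mul_mem S_mem_elementary (upper_mem_elementary _))) hg'_mem
termination_by c.natAbs
decreasing_by
  rw [← Int.natAbs_abs c]
  exact Int.natAbs_lt_natAbs_of_nonneg_of_lt (Int.emod_nonneg a hc0) (Int.emod_lt_abs a hc0)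

lemma elementary_eq_top (R : Subring ℚ) : elementary R = ⊤ := by
  refine eq_top_iff.2 fun g _ => ?_
  set x : ℚ := ((g 0 0 : R) : ℚ)
  set y : ℚ := ((g 1 0 : R) : ℚ)
  refine mem_elementary_of_mul_eq_intCast (d := x.den * y.den) (by positivity) g
    (x.num * y.den) (y.num * x.den) ?_ ?_
  · push_cast; rw [← mul_assoc, Rat.mul_den_eq_num]
  · push_cast; rw [mul_left_comm, Rat.mul_den_eq_num]; ring

end SL2

namespace Zinv
open Matrix.SpecialLinearGroup SL2

lemma exists_pow_mul_eq_intCast (m : ℕ) {x : ℚ} (hx : x ∈ Zinv m) :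
    ∃ (k : ℕ) (n : ℤ), (m : ℚ) ^ k * x = n := by
  induction hx using Subring.closure_induction with
  | mem x hx =>
    rw [Set.mem_singleton_iff.1 hx]
    rcases eq_or_ne (m : ℚ) 0 with hm | hm
    · exact ⟨0, 0, by simp [hm]⟩
    · exact ⟨1, 1, by simp [hm]⟩
  | zero => exact ⟨0, 0, by simp⟩
  | one => exact ⟨0, 1, by simp⟩
  | add x y _ _ hx hy =>
    obtain ⟨k, n, hk⟩ := hx
    obtain ⟨l, n', hl⟩ := hy
    exact ⟨k + l, n * m ^ l + n' * m ^ k, by push_cast; rw [← hk, ← hl]; ring⟩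
  | neg x _ hx =>
    obtain ⟨k, n, hk⟩ := hx
    exact ⟨k, -n, by push_cast; rw [← hk]; ring⟩
  | mul x y _ _ hx hy =>
    obtain ⟨k, n, hk⟩ := hx
    obtain ⟨l, n', hl⟩ := hy
    exact ⟨k + l, n * n', by push_cast; rw [← hk, ← hl]; ring⟩

variable {m : ℕ}

def natUnit (hm : m ≠ 0) : (Zinv m)ˣ where
  val := m
  inv := ⟨(m : ℚ)⁻¹, invMem m⟩
  val_inv := Subtype.ext <| by simp [hm]
  inv_val := Subtype.ext <| by simp [hm]

lemma natCast_mul_natUnit_inv (hm : m ≠ 0) : (m : Zinv m) * ↑(natUnit hm)⁻¹ = 1 :=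
  (natUnit hm).mul_inv

lemma matA_eq_lower : matA m = lower 1 := by
  ext i j; fin_cases i <;> fin_cases j <;> simp [matA, coe_lower]

lemma matQ_eq_upper (hm : m ≠ 0) : matQ m = upper (-↑(natUnit hm)⁻¹) := by
  ext i j; fin_cases i <;> fin_cases j <;> simp [matQ, coe_upper, natUnit]

lemma matA_zpow (n : ℤ) : matA m ^ n = lower (n : Zinv m) := by
  rw [matA_eq_lower, transvection_zpow, zsmul_one]

lemma matQ_zpow_mul (hm : m ≠ 0) (n : ℤ) : matQ m ^ (-(n * m)) = upper (n : Zinv m) := by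
  rw [matQ_eq_upper hm, transvection_zpow, zsmul_eq_mul]
  push_cast
  rw [neg_mul_neg, mul_assoc, natCast_mul_natUnit_inv hm, mul_one]

abbrev generated (m : ℕ) : Subgroup SL(2, Zinv m) := Subgroup.closure {matA m, matQ m}

lemma matA_mem : matA m ∈ generated m := Subgroup.subset_closure (by simp)

lemma matQ_mem : matQ m ∈ generated m := Subgroup.subset_closure (by simp)

lemma lower_intCast_mem (n : ℤ) : lower (n : Zinv m) ∈ generated m :=
  matA_zpow n ▸ zpow_mem matA_mem n

lemma upper_intCast_mem (hm : m ≠ 0) (n : ℤ) : upper (n : Zinv m) ∈ generated m :=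
  matQ_zpow_mul hm n ▸ zpow_mem matQ_mem _

lemma S_mem (hm : m ≠ 0) : S ∈ generated m := by
  have h1 := lower_intCast_mem (m := m) 1
  have h2 := upper_intCast_mem (m := m) hm (-1)
  push_cast at h1 h2
  exact mul_mem (mul_mem h1 h2) h1

lemma diag_natUnit_mem (hm : m ≠ 0) : diag (natUnit hm) ∈ generated m := by
  rw [eq_mul_inv_of_mul_eq (diag_mul_lower_mul_upper_mul_lower (natUnit hm))]
  have hu : ((natUnit hm : (Zinv m)ˣ) : Zinv m) = ((m : ℤ) : Zinv m) := by simp [natUnit]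
  rw [hu, ← matQ_eq_upper hm]
  exact mul_mem (S_mem hm) <| inv_mem <|
    mul_mem (mul_mem (lower_intCast_mem _) matQ_mem) (lower_intCast_mem _)

-- Conjugating by `diag (m ^ k)` multiplies the upper entry by `m ^ (2 * k)`, which clears its
-- denominator.
lemma upper_mem (hm : m ≠ 0) (t : Zinv m) : upper t ∈ generated m := by
  obtain ⟨k, n, hk⟩ := exists_pow_mul_eq_intCast m t.2
  set D := diag (natUnit hm ^ k)
  have hD : D ∈ generated m := by
    rw [show D = diag (natUnit hm) ^ k from map_pow ..]
    exact pow_mem (diag_natUnit_mem hm) k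
  have hconj : D * upper t = upper ((m ^ k * n : ℤ) : Zinv m) * D := by
    rw [diag_mul_upper]
    congr 2
    apply Subtype.ext
    push_cast [natUnit]
    rw [← hk]; ring
  rw [← inv_mul_cancel_left D (upper t), hconj]
  exact mul_mem (inv_mem hD) (mul_mem (upper_intCast_mem hm _) hD)

lemma lower_mem (hm : m ≠ 0) (t : Zinv m) : lower t ∈ generated m := by
  rw [← mul_inv_eq_of_eq_mul (by rw [S_mul_upper, neg_neg] : S * upper (-t) = lower t * S)]
  exact mul_mem (mul_mem (S_mem hm) (upper_mem hm _)) (inv_mem (S_mem hm))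

lemma generated_eq_top (hm : m ≠ 0) : generated m = ⊤ := by
  refine eq_top_iff.2 ((elementary_eq_top (Zinv m)).symm.le.trans ?_)
  refine Subgroup.closure_le _ |>.2 ?_
  rintro _ (⟨t, rfl⟩ | ⟨t, rfl⟩)
  exacts [upper_mem hm t, lower_mem hm t]

lemma matA_pow (n : ℕ) : matA m ^ n = lower (n : Zinv m) := by
  rw [← zpow_natCast, matA_zpow, Int.cast_natCast]

lemma matQ_pow_self (hm : m ≠ 0) : matQ m ^ m = upper (-1) := by
  rw [← zpow_natCast, show (m : ℤ) = -((-1 : ℤ) * m) by ring, matQ_zpow_mul hm, Int.cast_neg,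
    Int.cast_one]

lemma lift_eq_one_of_mem_Hrels (hm : m ≠ 0) :
    ∀ r ∈ Hrels m, FreeGroup.lift ![matA m, matQ m] r = 1 := by
  simp only [Hrels, Set.mem_insert_iff, Set.mem_singleton_iff]
  rintro r (rfl | rfl | rfl) <;>
    simp only [map_mul, map_pow, map_inv, FreeGroup.lift_apply_of, Matrix.cons_val_zero,
      Matrix.cons_val_one, mul_inv_eq_one]
  · rw [matA_pow, matQ_eq_upper hm]
    exact braid (by rw [mul_neg, natCast_mul_natUnit_inv hm])
  · rw [matQ_pow_self hm, matA_eq_lower]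
    exact (braid (by ring)).symm
  · rw [matA_pow, matQ_pow_self hm, Nat.cast_ofNat]
    exact lower_mul_upper_pow_four

end Zinv

theorem stmt_13 (m : ℕ) (hm : 0 < m) :
    ∃ φ : PresentedGroup (Hrels m) →* Matrix.SpecialLinearGroup (Fin 2) (Zinv m),
      Function.Surjective φ ∧
      φ (PresentedGroup.of 0) = matA m ∧
      φ (PresentedGroup.of 1) = matQ m := by
  have hrels := Zinv.lift_eq_one_of_mem_Hrels hm.ne'
  refine ⟨PresentedGroup.toGroup hrels, ?_, PresentedGroup.toGroup.of hrels,
    PresentedGroup.toGroup.of hrels⟩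
  rw [← MonoidHom.range_eq_top, eq_top_iff, ← Zinv.generated_eq_top hm.ne', Subgroup.closure_le]
  rintro _ (rfl | rfl)
  exacts [⟨.of 0, PresentedGroup.toGroup.of hrels⟩, ⟨.of 1, PresentedGroup.toGroup.of hrels⟩]
end

section
/- In any group in which x^m y x^m = y x^m y holds (in particular in the group presented by ⟨x, y ∣ x^m y x^m = y x^m y⟩), one has x^{m²} y x^m = y x^m y^m. -/
theorem stmt_18 {G : Type*} [Group G] (m : ℕ) (hm : 0 < m) (x y : G)
    (h : x ^ m * y * x ^ m = y * x ^ m * y) :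
    x ^ (m ^ 2) * y * x ^ m = y * x ^ m * y ^ m := by
  have key : ∀ k : ℕ, (x ^ m) ^ k * y * x ^ m = y * x ^ m * y ^ k := by
    intro k
    induction k with
    | zero => simp
    | succ n ih =>
      calc (x ^ m) ^ (n + 1) * y * x ^ m
          = x ^ m * ((x ^ m) ^ n * y * x ^ m) := by group
        _ = x ^ m * (y * x ^ m * y ^ n) := by rw [ih]
        _ = (x ^ m * y * x ^ m) * y ^ n := by group
        _ = (y * x ^ m * y) * y ^ n := by rw [h]
        _ = y * x ^ m * y ^ (n + 1) := by group
  have hk := key m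
  rwa [← pow_mul, ← sq] at hk
end

section
/- In any group G with elements a, q satisfying a² q a² = q a² q, q² a q² = a q² a, and (a²q²)⁴ = 1, the element b := a⁻¹ q⁻² a⁻¹ satisfies b⁴ = 1 and (b a)³ = b². -/
/-!
With `x = a⁻¹` and `y = q⁻²`, the element `b = x * y * x` is the conjugate of `(a²q²)⁻¹` by `a⁻¹`,
so `b⁴ = 1`. Inverting `q² a q² = a q² a` gives the braid relation `y x y = x y x`, and in any
monoid the braid relation yields `(x y)³ = (x y x)²`; here `x y = b a`.
-/

theorem mul_pow_three_eq_sq_of_braid {M : Type*} [Monoid M] {x y : M}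
    (h : y * x * y = x * y * x) : (x * y) ^ 3 = (x * y * x) ^ 2 := by
  calc (x * y) ^ 3 = x * y * x * (y * x * y) := by
        simp only [pow_succ, pow_zero, one_mul, mul_assoc]
    _ = (x * y * x) ^ 2 := by rw [h, sq]

theorem inv_braid {G : Type*} [Group G] {x y : G} (h : x * y * x = y * x * y) :
    x⁻¹ * y⁻¹ * x⁻¹ = y⁻¹ * x⁻¹ * y⁻¹ := by
  simpa only [mul_inv_rev, mul_assoc] using congrArg Inv.inv h

theorem stmt_19_general {G : Type*} [Group G] (a q : G)
    (h2 : q ^ 2 * a * q ^ 2 = a * q ^ 2 * a)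
    (h3 : (a ^ 2 * q ^ 2) ^ 4 = 1) :
    (a⁻¹ * q⁻¹ ^ 2 * a⁻¹) ^ 4 = 1 ∧
    (a⁻¹ * q⁻¹ ^ 2 * a⁻¹ * a) ^ 3 = (a⁻¹ * q⁻¹ ^ 2 * a⁻¹) ^ 2 := by
  constructor
  · have hconj : a⁻¹ * q⁻¹ ^ 2 * a⁻¹ = a⁻¹ * (a ^ 2 * q ^ 2)⁻¹ * a⁻¹⁻¹ := by group
    rw [hconj, conj_pow, inv_pow, h3, inv_one, mul_one, mul_inv_cancel]
  · have hbraid : q⁻¹ ^ 2 * a⁻¹ * q⁻¹ ^ 2 = a⁻¹ * q⁻¹ ^ 2 * a⁻¹ := by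
      simpa only [inv_pow] using inv_braid h2
    rw [inv_mul_cancel_right]
    exact mul_pow_three_eq_sq_of_braid hbraid

theorem stmt_19 {G : Type*} [Group G] (a q : G)
    (h1 : a ^ 2 * q * a ^ 2 = q * a ^ 2 * q)
    (h2 : q ^ 2 * a * q ^ 2 = a * q ^ 2 * a)
    (h3 : (a ^ 2 * q ^ 2) ^ 4 = 1) :
    (a⁻¹ * q⁻¹ ^ 2 * a⁻¹) ^ 4 = 1 ∧
    (a⁻¹ * q⁻¹ ^ 2 * a⁻¹ * a) ^ 3 = (a⁻¹ * q⁻¹ ^ 2 * a⁻¹) ^ 2 :=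
  stmt_19_general a q h2 h3
end
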